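/- Let A and B be nonempty arrays with the same number of columns. Then A ⊖ B = B ⊖ A (vertical concatenation) if and only if there exist a nonempty array C and positive integers e, f such that A = C^{e×1} and B = C^{f×1}. -/

import Mathlib

/-!
Read an array `A : Fin m × Fin n → σ` as the word `arrRows A` of its rows, over the alphabet
`Fin n → σ`. Vertical concatenation becomes concatenation of words and `C^{e×1}` becomes the
power `wpow (arrRows C) e`, so the statement reduces to the Lyndon–Schützenberger theorem: two
words commute if and only if they are powers of a common word. That common word is nonempty
because `A` is.
-/

/-- k-fold concatenation (power) of a word. -/
def wpow {σ : Type*} (z : List σ) (k : ℕ) : List σ := (List.replicate k z).flatten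

/-- A nonempty word is primitive if it is not a proper power. -/
def WPrimitive {σ : Type*} (w : List σ) : Prop :=
  w ≠ [] ∧ ∀ (v : List σ) (e : ℕ), 2 ≤ e → w ≠ wpow v e

theorem fin_pos_of_mul {p m : ℕ} (i : Fin (p * m)) : 0 < m :=
  Nat.pos_of_ne_zero fun h => absurd i.isLt (by simp [h])

/-- `arrRep A p q` is `A^{p×q}`: the array `A` repeated in `p` rows and `q` columns. -/
def arrRep {σ : Type*} {m n : ℕ} (A : Fin m × Fin n → σ) (p q : ℕ) :
    Fin (p * m) × Fin (q * n) → σ :=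
  fun x => A (⟨x.1.val % m, Nat.mod_lt _ (fin_pos_of_mul x.1)⟩,
              ⟨x.2.val % n, Nat.mod_lt _ (fin_pos_of_mul x.2)⟩)

/-- Equality of arrays of possibly (syntactically) different dimensions. -/
def arrEq {σ : Type*} {m n m' n' : ℕ} (A : Fin m × Fin n → σ)
    (B : Fin m' × Fin n' → σ) : Prop :=
  m = m' ∧ n = n' ∧ ∀ (i j : ℕ) (h1 : i < m) (h2 : j < n) (h1' : i < m') (h2' : j < n'),
    A (⟨i, h1⟩, ⟨j, h2⟩) = B (⟨i, h1'⟩, ⟨j, h2'⟩)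

/-- An array is primitive if it is not a nontrivial `p×q` repetition of another array. -/
def ArrPrimitive {σ : Type*} {m n : ℕ} (M : Fin m × Fin n → σ) : Prop :=
  ∀ (m' n' p q : ℕ) (A : Fin m' × Fin n' → σ), 0 < p → 0 < q →
    arrEq M (arrRep A p q) → p = 1 ∧ q = 1

/-- Horizontal concatenation of arrays with equal numbers of rows. -/
def hcat {σ : Type*} {m1 m2 n1 n2 : ℕ} (h : m1 = m2)
    (A : Fin m1 × Fin n1 → σ) (B : Fin m2 × Fin n2 → σ) :
    Fin m1 × Fin (n1 + n2) → σ :=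
  fun x => if hn : x.2.val < n1 then A (x.1, ⟨x.2.val, hn⟩)
           else B (⟨x.1.val, h ▸ x.1.isLt⟩, ⟨x.2.val - n1, by have := x.2.isLt; omega⟩)

/-- Vertical concatenation of arrays with equal numbers of columns. -/
def vcat {σ : Type*} {m1 m2 n1 n2 : ℕ} (h : n1 = n2)
    (A : Fin m1 × Fin n1 → σ) (B : Fin m2 × Fin n2 → σ) :
    Fin (m1 + m2) × Fin n1 → σ :=
  fun x => if hm : x.1.val < m1 then A (⟨x.1.val, hm⟩, x.2)
           else B (⟨x.1.val - m1, by have := x.1.isLt; omega⟩, ⟨x.2.val, h ▸ x.2.isLt⟩)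

/-- The word over the alphabet of columns corresponding to an array. -/
def colWord {σ : Type*} {m n : ℕ} (A : Fin m × Fin n → σ) : List (Fin m → σ) :=
  List.ofFn fun j => fun i => A (i, j)

/-- Row `i` of an array, as a word. -/
def rowWord {σ : Type*} {m n : ℕ} (A : Fin m × Fin n → σ) (i : Fin m) : List σ :=
  List.ofFn fun j => A (i, j)

/-- Column `j` of an array, as a word. -/
def colAt {σ : Type*} {m n : ℕ} (A : Fin m × Fin n → σ) (j : Fin n) : List σ :=
  List.ofFn fun i => A (i, j)

/-- Row-major reading of an array. -/
def rowMajor {σ : Type*} {m n : ℕ} (A : Fin m × Fin n → σ) : List σ :=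
  (List.ofFn fun i => rowWord A i).flatten

/-- `{x,y}*`: words that are concatenations of copies of `x` and `y`. -/
def InStar {σ : Type*} (x y w : List σ) : Prop :=
  ∃ L : List (List σ), (∀ u ∈ L, u = x ∨ u = y) ∧ w = L.flatten

section Words

variable {α : Type*}

theorem wpow_add (z : List α) (k l : ℕ) : wpow z (k + l) = wpow z k ++ wpow z l := by
  rw [wpow, wpow, wpow, List.replicate_add, List.flatten_append]

theorem length_wpow (z : List α) (k : ℕ) : (wpow z k).length = k * z.length := by
  simp [wpow]

theorem exists_eq_wpow_of_append_comm {x y : List α} (h : x ++ y = y ++ x) :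
    ∃ z k l, x = wpow z k ∧ y = wpow z l := by
  induction hN : x.length + y.length using Nat.strong_induction_on generalizing x y with
  | _ N ih =>
  wlog hxy : x.length ≤ y.length generalizing x y
  · obtain ⟨z, k, l, hx, hy⟩ := this h.symm (by omega) (by omega)
    exact ⟨z, l, k, hy, hx⟩
  obtain rfl | hx := eq_or_ne x []
  · exact ⟨y, 0, 1, rfl, by simp [wpow]⟩
  obtain ⟨t, rfl⟩ : x <+: y :=
    List.prefix_of_prefix_length_le (List.prefix_append x y) (h ▸ List.prefix_append y x) hxy
  have ht : x ++ t = t ++ x := by simpa using h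
  have hlen : x.length + t.length < N := by
    have := List.length_pos_iff.mpr hx
    simp only [List.length_append] at hN
    omega
  obtain ⟨z, k, l, rfl, rfl⟩ := ih _ hlen ht rfl
  exact ⟨z, k, k + l, rfl, (wpow_add z k l).symm⟩

end Words

section Arrays

variable {σ : Type*}

def arrRows {m n : ℕ} (A : Fin m × Fin n → σ) : List (Fin n → σ) :=
  List.ofFn (Function.curry A)

@[simp]
theorem length_arrRows {m n : ℕ} (A : Fin m × Fin n → σ) : (arrRows A).length = m := by
  simp [arrRows]

theorem arrEq_iff_arrRows_eq {m m' n : ℕ} {A : Fin m × Fin n → σ} {B : Fin m' × Fin n → σ} :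
    arrEq A B ↔ arrRows A = arrRows B := by
  constructor
  · rintro ⟨rfl, -, h⟩
    exact congrArg List.ofFn (funext₂ fun i j => h i j i.isLt j.isLt i.isLt j.isLt)
  · intro h
    obtain rfl : m = m' := by simpa using congrArg List.length h
    rw [arrRows, arrRows, List.ofFn_inj] at h
    exact ⟨rfl, rfl, fun i j _ _ _ _ => congrFun₂ h _ _⟩

theorem arrRows_vcat {m1 m2 n : ℕ} (A : Fin m1 × Fin n → σ) (B : Fin m2 × Fin n → σ) :
    arrRows (vcat rfl A B) = arrRows A ++ arrRows B := by
  rw [arrRows, arrRows, arrRows, ← List.ofFn_fin_append]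
  congr 1
  funext i j
  refine Fin.addCases (fun i => ?_) (fun i => ?_) i <;> simp [vcat]

theorem arrEq_arrRep_one_iff {m mc n : ℕ} (A : Fin m × Fin n → σ) (C : Fin mc × Fin n → σ)
    (e : ℕ) : arrEq A (arrRep C e 1) ↔ arrRows A = wpow (arrRows C) e := by
  have hrep :
      wpow (arrRows C) e = arrRows (Function.uncurry (Fin.repeat e (Function.curry C))) := by
    simp [arrRows, wpow]
  rw [hrep, ← arrEq_iff_arrRows_eq]
  simp only [arrEq, one_mul, true_and, and_congr_right_iff]
  exact fun _ => forall₄_congr fun i j _ hj => by simp only [arrRep, Nat.mod_eq_of_lt hj]; rfl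

theorem arrRows_uncurry_get {n : ℕ} (w : List (Fin n → σ)) :
    arrRows (Function.uncurry w.get) = w := by
  simp [arrRows]

end Arrays

theorem stmt10 {σ : Type*} {m1 m2 n : ℕ} (hm1 : 0 < m1) (hm2 : 0 < m2) (hn : 0 < n)
    (A : Fin m1 × Fin n → σ) (B : Fin m2 × Fin n → σ) :
    arrEq (vcat rfl A B) (vcat rfl B A) ↔
      ∃ (mc nc : ℕ) (C : Fin mc × Fin nc → σ) (e f : ℕ),
        0 < mc ∧ 0 < nc ∧ 0 < e ∧ 0 < f ∧
        arrEq A (arrRep C e 1) ∧ arrEq B (arrRep C f 1) := by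
  rw [arrEq_iff_arrRows_eq, arrRows_vcat, arrRows_vcat]
  constructor
  · intro hcomm
    obtain ⟨w, e, f, hA, hB⟩ := exists_eq_wpow_of_append_comm hcomm
    have hm1' : m1 = e * w.length := by simpa [length_wpow] using congrArg List.length hA
    have hm2' : m2 = f * w.length := by simpa [length_wpow] using congrArg List.length hB
    refine ⟨w.length, n, Function.uncurry w.get, e, f, ?_, hn, ?_, ?_, ?_, ?_⟩
    · exact Nat.pos_of_mul_pos_left (hm1' ▸ hm1)
    · exact Nat.pos_of_mul_pos_right (hm1' ▸ hm1)
    · exact Nat.pos_of_mul_pos_right (hm2' ▸ hm2)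
    · rwa [arrEq_arrRep_one_iff, arrRows_uncurry_get]
    · rwa [arrEq_arrRep_one_iff, arrRows_uncurry_get]
  · rintro ⟨mc, nc, C, e, f, -, -, -, -, hA, hB⟩
    obtain rfl : nc = n := by have := hA.2.1; omega
    rw [arrEq_arrRep_one_iff] at hA hB
    rw [hA, hB, ← wpow_add, ← wpow_add, add_comm]
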